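/- arXiv:1202.2396 — 4 statements merged into one kernel-verified Lean document; each statement's English description precedes it below -/
import Mathlib

section
/- Let Q be a κ×κ rate matrix (nonnegative off-diagonal entries, zero row sums) that is irreducible, meaning its associated directed graph on states (with edge i→j iff Q_{ij} ≠ 0) is strongly connected. Then for every t > 0, the matrix exp(Qt) has strictly positive entries and is nonsingular. -/
/-!
Adding `c • 1` to `Q`, with `c` larger than every `-Q i i`, gives an entrywise nonnegative
matrix `A` with positive diagonal whose positive entries include every nonzero entry of `Q`.
Irreducibility then makes every entry of some power `A ^ k` positive, hence every entry of the
series `exp A`, and `exp Q = e⁻ᶜ • exp A`. Invertibility holds for any matrix exponential.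
-/

open NormedSpace Relation
open scoped Nat

namespace Matrix

variable {n : Type*} [Fintype n] [DecidableEq n]

theorem exists_pow_apply_pos_of_reflTransGen {R : Type*} [Ring R] [LinearOrder R]
    [IsStrictOrderedRing R] {A : Matrix n n R} (hA : ∀ i j, 0 ≤ A i j) {i j : n}
    (h : ReflTransGen (fun a b => 0 < A a b) i j) : ∃ k, 0 < (A ^ k) i j := by
  let := toQuiver A
  induction h with
  | refl => exact ⟨0, by simp⟩
  | tail _ hbc ih =>
    obtain ⟨k, hk⟩ := ih
    obtain ⟨⟨p, rfl⟩⟩ := (pow_apply_pos_iff_nonempty_path hA _ _ _).1 hk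
    exact ⟨_, (pow_apply_pos_iff_nonempty_path hA _ _ _).2 ⟨⟨p.cons ⟨hbc⟩, rfl⟩⟩⟩

open scoped Norms.Operator in
theorem exp_apply_pos_of_pow_apply_pos {A : Matrix n n ℝ} (hA : ∀ i j, 0 ≤ A i j) {i j : n}
    {k : ℕ} (hk : 0 < (A ^ k) i j) : 0 < exp A i j := by
  have hsum : HasSum (fun m : ℕ => ((m ! : ℝ)⁻¹ • A ^ m) i j) (exp A i j) :=
    Pi.hasSum.1 (Pi.hasSum.1 (exp_series_hasSum_exp' (𝕂 := ℝ) A) i) j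
  have hterm (m : ℕ) : 0 ≤ ((m ! : ℝ)⁻¹ • A ^ m) i j :=
    mul_nonneg (by positivity) (pow_apply_nonneg hA m i j)
  exact (mul_pos (by positivity) hk).trans_le (le_hasSum hsum k fun m _ => hterm m)

open scoped Norms.Operator in
theorem exp_add_smul_one (A : Matrix n n ℝ) (r : ℝ) :
    exp (A + r • 1) = Real.exp r • exp A := by
  have h : exp (algebraMap ℝ (Matrix n n ℝ) r) = algebraMap ℝ _ (Real.exp r) := by
    rw [Real.exp_eq_exp_ℝ]
    exact (algebraMap_exp_comm r).symm
  rw [exp_add_of_commute _ _ ((Commute.one_right A).smul_right r),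
    ← Algebra.algebraMap_eq_smul_one, h, ← Algebra.commutes, ← Algebra.smul_def]

theorem exp_apply_pos_of_reflTransGen {Q : Matrix n n ℝ} (hQ : ∀ i j, i ≠ j → 0 ≤ Q i j)
    {i j : n} (h : ReflTransGen (fun a b => Q a b ≠ 0) i j) : 0 < exp Q i j := by
  obtain ⟨c, hc⟩ : ∃ c : ℝ, ∀ k, 0 < Q k k + c :=
    ⟨∑ k, |Q k k| + 1, fun k => by
      have := Finset.single_le_sum (fun l _ => abs_nonneg (Q l l)) (Finset.mem_univ k)
      linarith [neg_abs_le (Q k k)]⟩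
  set A := Q + c • 1
  have hA_apply (a b : n) : A a b = if a = b then Q a a + c else Q a b := by
    split_ifs with hab <;> simp [A, hab]
  have hA (a b : n) : 0 ≤ A a b := by
    rw [hA_apply]
    split_ifs with hab
    · exact (hc a).le
    · exact hQ a b hab
  have hpos (a b : n) (hab : Q a b ≠ 0) : 0 < A a b := by
    rw [hA_apply]
    split_ifs with hab'
    · exact hc a
    · exact (hQ a b hab').lt_of_ne' hab
  obtain ⟨k, hk⟩ := exists_pow_apply_pos_of_reflTransGen hA (ReflTransGen.mono hpos i j h)
  have hQA : Q = A + (-c) • 1 := by simp [A]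
  rw [hQA, exp_add_smul_one, smul_apply, smul_eq_mul]
  exact mul_pos (Real.exp_pos _) (exp_apply_pos_of_pow_apply_pos hA hk)

end Matrix

theorem stmt0_general {κ : ℕ} (Q : Matrix (Fin κ) (Fin κ) ℝ)
    (hoff : ∀ i j, i ≠ j → 0 ≤ Q i j)
    (hirr : ∀ i j : Fin κ, Relation.ReflTransGen (fun a b => Q a b ≠ 0) i j)
    (t : ℝ) (ht : 0 < t) :
    (∀ i j, 0 < NormedSpace.exp (t • Q) i j) ∧ IsUnit (NormedSpace.exp (t • Q)).det := by
  have htQ_offDiag (i j : Fin κ) (hij : i ≠ j) : 0 ≤ (t • Q) i j :=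
    mul_nonneg ht.le (hoff i j hij)
  have htQ_support (a b : Fin κ) (hab : Q a b ≠ 0) : (t • Q) a b ≠ 0 :=
    mul_ne_zero ht.ne' hab
  refine ⟨fun i j => ?_, (Matrix.isUnit_iff_isUnit_det _).1 (Matrix.isUnit_exp _)⟩
  exact Matrix.exp_apply_pos_of_reflTransGen htQ_offDiag
    (Relation.ReflTransGen.mono htQ_support i j (hirr i j))

/-- An irreducible rate matrix `Q` (nonnegative off-diagonal entries, zero
row sums, strongly connected adjacency digraph) has `exp(Qt)` with strictly positive
entries and nonsingular, for every `t > 0`. -/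
theorem stmt0 {κ : ℕ} (Q : Matrix (Fin κ) (Fin κ) ℝ)
    (hoff : ∀ i j, i ≠ j → 0 ≤ Q i j)
    (hrow : ∀ i, ∑ j, Q i j = 0)
    (hirr : ∀ i j : Fin κ, Relation.ReflTransGen (fun a b => Q a b ≠ 0) i j)
    (t : ℝ) (ht : 0 < t) :
    (∀ i j, 0 < NormedSpace.exp (t • Q) i j) ∧ IsUnit (NormedSpace.exp (t • Q)).det :=
  stmt0_general Q hoff hirr t ht
end

section
/- Fix a, b, c ∈ (0,1). The map F: R⁵ → R⁴ given by F(d,e,f,g,π) = ((1−π)d + πf, (1−π)de + πg, (1−π)e + πfg, (1−π)de + πfg) has surjective derivative (Jacobian of rank 4) at the point (d,e,f,g,π) = (0, bc, b, c, a). -/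
/-!
The partial derivatives of `F` in `d, e, f, g` at `(0, bc, b, c, a)` already form an invertible
`4 × 4` matrix: its determinant is `a² (1 - a)² c (1 - b + b²)`, and `1 - b + b² > 0` for every
real `b`. Hence the Jacobian has full row rank.
-/

open Matrix

theorem Matrix.mulVec_surjective_of_isUnit_submatrix {m n R : Type*} [Fintype m] [DecidableEq m]
    [Fintype n] [DecidableEq n] [CommRing R] (A : Matrix m n R) (f : m → n)
    (h : IsUnit (A.submatrix id f)) : Function.Surjective A.mulVec := by
  intro y
  obtain ⟨x, rfl⟩ := mulVec_surjective_iff_isUnit.2 h y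
  refine ⟨(1 : Matrix n n R).submatrix id f *ᵥ x, ?_⟩
  rw [mulVec_mulVec, ← Equiv.coe_refl, mul_submatrix_one]
  rfl

def mixtureMap (v : Fin 5 → ℝ) : Fin 4 → ℝ :=
  ![(1 - v 4) * v 0 + v 4 * v 2,
    (1 - v 4) * (v 0 * v 1) + v 4 * v 3,
    (1 - v 4) * v 1 + v 4 * (v 2 * v 3),
    (1 - v 4) * (v 0 * v 1) + v 4 * (v 2 * v 3)]

def mixtureJacobian (v : Fin 5 → ℝ) : Matrix (Fin 4) (Fin 5) ℝ :=
  !![1 - v 4, 0, v 4, 0, v 2 - v 0;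
     (1 - v 4) * v 1, (1 - v 4) * v 0, 0, v 4, v 3 - v 0 * v 1;
     0, 1 - v 4, v 4 * v 3, v 4 * v 2, v 2 * v 3 - v 1;
     (1 - v 4) * v 1, (1 - v 4) * v 0, v 4 * v 3, v 4 * v 2, v 2 * v 3 - v 0 * v 1]

theorem hasFDerivAt_mixtureMap (p : Fin 5 → ℝ) :
    HasFDerivAt mixtureMap (toLin' (mixtureJacobian p)).toContinuousLinearMap p := by
  have hx (i : Fin 5) := hasFDerivAt_apply (𝕜 := ℝ) i p
  have hw := (hasFDerivAt_const (1 : ℝ) p).sub (hx 4)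
  rw [hasFDerivAt_pi']
  intro i
  fin_cases i <;> [
    convert (hw.mul (hx 0)).add ((hx 4).mul (hx 2)) using 1;
    convert (hw.mul ((hx 0).mul (hx 1))).add ((hx 4).mul (hx 3)) using 1;
    convert (hw.mul (hx 1)).add ((hx 4).mul ((hx 2).mul (hx 3))) using 1;
    convert (hw.mul ((hx 0).mul (hx 1))).add ((hx 4).mul ((hx 2).mul (hx 3))) using 1]
  all_goals
    ext
    simp [mixtureMap, mixtureJacobian, dotProduct, Fin.sum_univ_five] <;> ring

theorem det_mixtureJacobian_submatrix_castSucc (a b c : ℝ) :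
    ((mixtureJacobian ![0, b * c, b, c, a]).submatrix id Fin.castSucc).det
      = a ^ 2 * (1 - a) ^ 2 * c * (1 - b + b ^ 2) := by
  rw [det_succ_row_zero]
  simp [Fin.sum_univ_succ, det_fin_three, mixtureJacobian, Fin.succAbove]
  ring

theorem mulVec_mixtureJacobian_surjective {a c : ℝ} (b : ℝ) (ha₀ : a ≠ 0) (ha₁ : a ≠ 1)
    (hc : c ≠ 0) : Function.Surjective (mixtureJacobian ![0, b * c, b, c, a]).mulVec := by
  refine (mixtureJacobian _).mulVec_surjective_of_isUnit_submatrix Fin.castSucc ?_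
  rw [isUnit_iff_isUnit_det, det_mixtureJacobian_submatrix_castSucc, isUnit_iff_ne_zero]
  have hb : 1 - b + b ^ 2 ≠ 0 := by nlinarith [sq_nonneg (b - 1 / 2)]
  exact mul_ne_zero (mul_ne_zero (mul_ne_zero (pow_ne_zero 2 ha₀)
    (pow_ne_zero 2 (sub_ne_zero.2 ha₁.symm))) hc) hb

theorem stmt13_general (a b c : ℝ) (ha : a ∈ Set.Ioo (0:ℝ) 1)
    (hc : c ∈ Set.Ioo (0:ℝ) 1) :
    Function.Surjective
      (fderiv ℝ
        (fun v : Fin 5 → ℝ =>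
          ![(1 - v 4) * v 0 + v 4 * v 2,
            (1 - v 4) * (v 0 * v 1) + v 4 * v 3,
            (1 - v 4) * v 1 + v 4 * (v 2 * v 3),
            (1 - v 4) * (v 0 * v 1) + v 4 * (v 2 * v 3)])
        ![0, b * c, b, c, a]) := by
  change Function.Surjective (fderiv ℝ mixtureMap _)
  rw [(hasFDerivAt_mixtureMap _).fderiv]
  exact mulVec_mixtureJacobian_surjective b ha.1.ne' ha.2.ne hc.1.ne'

/-- For a, b, c ∈ (0,1), the map
`F(d,e,f,g,π) = ((1−π)d + πf, (1−π)de + πg, (1−π)e + πfg, (1−π)de + πfg)` has surjective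
derivative (Jacobian of rank 4) at the point (0, bc, b, c, a). -/
theorem stmt13 (a b c : ℝ) (ha : a ∈ Set.Ioo (0:ℝ) 1) (hb : b ∈ Set.Ioo (0:ℝ) 1)
    (hc : c ∈ Set.Ioo (0:ℝ) 1) :
    Function.Surjective
      (fderiv ℝ
        (fun v : Fin 5 → ℝ =>
          ![(1 - v 4) * v 0 + v 4 * v 2,
            (1 - v 4) * (v 0 * v 1) + v 4 * v 3,
            (1 - v 4) * v 1 + v 4 * (v 2 * v 3),
            (1 - v 4) * (v 0 * v 1) + v 4 * (v 2 * v 3)])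
        ![0, b * c, b, c, a]) :=
  stmt13_general a b c ha hc
end

section
/- Fix a, b, c ∈ (0,1). There exist d, e, f, g, π ∈ (0,1) satisfying ab = (1−π)d + πf, ac = (1−π)de + πg, bc = (1−π)e + πfg, and abc = (1−π)de + πfg. -/
/-!
At `d = 0` the system has the boundary solution `(e, f, g, π) = (b c, b, c, a)`, which lies in the
open cube. For every `d` the system can be solved explicitly for `e, f, g, π`, and the resulting
rational curve is continuous at `d = 0`; so a small `d > 0` gives a solution with all unknowns in
`(0, 1)`.
-/

open Filter Topology Set

namespace JukesCantorMimicking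

def IsMimicking (a b c d e f g π : ℝ) : Prop :=
  a * b = (1 - π) * d + π * f ∧
    a * c = (1 - π) * (d * e) + π * g ∧
    b * c = (1 - π) * e + π * (f * g) ∧
    a * b * c = (1 - π) * (d * e) + π * (f * g)

variable (a b c : ℝ)

/- The branch through the boundary solution, parametrised by `d = t`: subtracting equations gives
`(1 - π) e (1 - t) = b c (1 - a)` and `π f g (1 - t) = b c (a - t)`, the second equation then
gives `π g` (hence `f`), and the first one `π`. -/
noncomputable def branchF (t : ℝ) : ℝ := b * (a - t) / (a - (a + b - a * b) * t)

noncomputable def branchWeight (t : ℝ) : ℝ := (a * b - t) / (branchF a b t - t)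

noncomputable def branchG (t : ℝ) : ℝ :=
  c * (a - (a + b - a * b) * t) / ((1 - t) * branchWeight a b t)

noncomputable def branchE (t : ℝ) : ℝ := b * c * (1 - a) / ((1 - branchWeight a b t) * (1 - t))

variable {a b c}

theorem isMimicking_branch {t : ℝ} (ht : t ≠ 1) (hf : branchF a b t ≠ 0)
    (hπ₀ : branchWeight a b t ≠ 0) (hπ₁ : branchWeight a b t ≠ 1) :
    IsMimicking a b c t (branchE a b c t) (branchF a b t) (branchG a b c t)
      (branchWeight a b t) := by
  -- a vanishing denominator would make the quotient `0`
  have hD := (div_ne_zero_iff.mp hf).2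
  have hft := (div_ne_zero_iff.mp hπ₀).2
  have ht' : 1 - t ≠ 0 := sub_ne_zero.mpr ht.symm
  set D := a - (a + b - a * b) * t
  set f := branchF a b t
  set π := branchWeight a b t
  set g := branchG a b c t
  set e := branchE a b c t
  have hfD : f * D = b * (a - t) := div_mul_cancel₀ _ hD
  have hπf : π * (f - t) = a * b - t := div_mul_cancel₀ _ hft
  have hg : g * ((1 - t) * π) = c * D := div_mul_cancel₀ _ (mul_ne_zero ht' hπ₀)
  have he : e * ((1 - π) * (1 - t)) = b * c * (1 - a) :=
    div_mul_cancel₀ _ (mul_ne_zero (sub_ne_zero.mpr (Ne.symm hπ₁)) ht')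
  refine ⟨by linear_combination -hπf, ?_, ?_, ?_⟩ <;> refine mul_right_cancel₀ ht' ?_
  · linear_combination -t * he - hg
  · linear_combination -he - f * hg - c * hfD
  · linear_combination -t * he - f * hg - c * hfD

theorem branchF_zero (ha : a ≠ 0) : branchF a b 0 = b := by
  simp [branchF, ha]

theorem branchWeight_zero (ha : a ≠ 0) (hb : b ≠ 0) : branchWeight a b 0 = a := by
  simp [branchWeight, branchF_zero ha, hb]

theorem branchG_zero (ha : a ≠ 0) (hb : b ≠ 0) : branchG a b c 0 = c := by
  simp [branchG, branchWeight_zero ha hb, ha]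

theorem branchE_zero (ha : a ≠ 0) (hb : b ≠ 0) (ha₁ : a ≠ 1) : branchE a b c 0 = b * c := by
  simp [branchE, branchWeight_zero ha hb, sub_ne_zero.mpr (Ne.symm ha₁)]

theorem continuousAt_branchF (ha : a ≠ 0) : ContinuousAt (branchF a b) 0 :=
  ContinuousAt.div (by fun_prop) (by fun_prop) (by simpa using ha)

theorem continuousAt_branchWeight (ha : a ≠ 0) (hb : b ≠ 0) :
    ContinuousAt (branchWeight a b) 0 :=
  ContinuousAt.div (by fun_prop) ((continuousAt_branchF ha).sub continuousAt_id)
    (by simpa [branchF_zero ha] using hb)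

theorem continuousAt_branchG (ha : a ≠ 0) (hb : b ≠ 0) : ContinuousAt (branchG a b c) 0 :=
  ContinuousAt.div (by fun_prop) ((continuousAt_const.sub continuousAt_id).mul
    (continuousAt_branchWeight ha hb)) (by simpa [branchWeight_zero ha hb] using ha)

theorem continuousAt_branchE (ha : a ≠ 0) (hb : b ≠ 0) (ha₁ : a ≠ 1) :
    ContinuousAt (branchE a b c) 0 :=
  ContinuousAt.div continuousAt_const ((continuousAt_const.sub
    (continuousAt_branchWeight ha hb)).mul (continuousAt_const.sub continuousAt_id))
    (by simpa [branchWeight_zero ha hb, sub_eq_zero] using ha₁.symm)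

theorem eventually_mem_Ioo_of_continuousAt {f : ℝ → ℝ} {x : ℝ} (hf : ContinuousAt f x)
    (hx : f x ∈ Ioo (0 : ℝ) 1) : ∀ᶠ t in 𝓝[>] x, f t ∈ Ioo (0 : ℝ) 1 :=
  nhdsWithin_le_nhds (hf.eventually_mem (isOpen_Ioo.mem_nhds hx))

theorem eventually_branch_mem_Ioo (ha : a ∈ Ioo (0 : ℝ) 1) (hb : b ∈ Ioo (0 : ℝ) 1)
    (hc : c ∈ Ioo (0 : ℝ) 1) :
    ∀ᶠ t in 𝓝[>] 0, t ∈ Ioo (0 : ℝ) 1 ∧ branchE a b c t ∈ Ioo (0 : ℝ) 1 ∧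
      branchF a b t ∈ Ioo (0 : ℝ) 1 ∧ branchG a b c t ∈ Ioo (0 : ℝ) 1 ∧
      branchWeight a b t ∈ Ioo (0 : ℝ) 1 := by
  have ha₀ := ha.1.ne'
  have hb₀ := hb.1.ne'
  refine Filter.Eventually.and (Ioo_mem_nhdsGT zero_lt_one) ?_
  refine (eventually_mem_Ioo_of_continuousAt (continuousAt_branchE ha₀ hb₀ ha.2.ne) ?_).and ?_
  · rw [branchE_zero ha₀ hb₀ ha.2.ne]
    exact ⟨mul_pos hb.1 hc.1, mul_lt_one_of_nonneg_of_lt_one_left hb.1.le hb.2 hc.2.le⟩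
  refine (eventually_mem_Ioo_of_continuousAt (continuousAt_branchF ha₀) ?_).and ?_
  · rwa [branchF_zero ha₀]
  refine (eventually_mem_Ioo_of_continuousAt (continuousAt_branchG ha₀ hb₀) ?_).and ?_
  · rwa [branchG_zero ha₀ hb₀]
  refine eventually_mem_Ioo_of_continuousAt (continuousAt_branchWeight ha₀ hb₀) ?_
  rwa [branchWeight_zero ha₀ hb₀]

end JukesCantorMimicking

/-- For any a, b, c ∈ (0,1) there exist d, e, f, g, π ∈ (0,1) solving the
3-leaf Jukes-Cantor mimicking system (complete mimicking by the open 2-class mixture). -/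
theorem stmt14 (a b c : ℝ) (ha : a ∈ Set.Ioo (0:ℝ) 1) (hb : b ∈ Set.Ioo (0:ℝ) 1)
    (hc : c ∈ Set.Ioo (0:ℝ) 1) :
    ∃ d e f g π : ℝ, d ∈ Set.Ioo (0:ℝ) 1 ∧ e ∈ Set.Ioo (0:ℝ) 1 ∧ f ∈ Set.Ioo (0:ℝ) 1 ∧
      g ∈ Set.Ioo (0:ℝ) 1 ∧ π ∈ Set.Ioo (0:ℝ) 1 ∧
      a * b = (1 - π) * d + π * f ∧
      a * c = (1 - π) * (d * e) + π * g ∧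
      b * c = (1 - π) * e + π * (f * g) ∧
      a * b * c = (1 - π) * (d * e) + π * (f * g) := by
  obtain ⟨t, ht, he, hf, hg, hπ⟩ :=
    (JukesCantorMimicking.eventually_branch_mem_Ioo ha hb hc).exists
  exact ⟨t, _, _, _, _, ht, he, hf, hg, hπ,
    JukesCantorMimicking.isMimicking_branch ht.2.ne hf.1.ne' hπ.1.ne' hπ.2.ne⟩
end

section
/- Let P = (p_{ijkl}) be the κ×κ×κ×κ tensor with entries p_{ijkl} = Σ_{m,n} u_i(m) v_j(m) N(m,n) w_k(n) x_l(n) for nonsingular κ×κ matrices U = (u_i(m)), V, W, X and a κ×κ matrix N with all entries nonzero. Then the 13|24-flattening of P, the κ²×κ² matrix with rows indexed by (i,k) and columns by (j,l), equals (U ⊗ W) diag(N) (V ⊗ X)ᵀ and has rank κ². -/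
open Matrix Kronecker

namespace Matrix

variable {R K l m n o p q : Type*} [Fintype p] [Fintype q]

theorem kronecker_mul_diagonal_mul_kronecker_transpose [CommSemiring R] [DecidableEq p]
    [DecidableEq q] (U : Matrix m p R) (W : Matrix n q R) (V : Matrix o p R)
    (X : Matrix l q R) (N : Matrix p q R) :
    (U ⊗ₖ W) * diagonal (fun r : p × q => N r.1 r.2) * (V ⊗ₖ X)ᵀ =
      of fun (a : m × n) (b : o × l) =>
        ∑ r, ∑ s, U a.1 r * V b.1 r * N r s * W a.2 s * X b.2 s := by
  ext ⟨i, k⟩ ⟨j, j'⟩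
  rw [mul_apply]
  simp only [mul_diagonal, transpose_apply, kroneckerMap_apply,
    Fintype.sum_prod_type, of_apply]
  exact Finset.sum_congr rfl fun r _ => Finset.sum_congr rfl fun s _ => by ring

theorem rank_kronecker_mul_diagonal_mul_kronecker_transpose [Field K] [DecidableEq p]
    [DecidableEq q] {U V : Matrix p p K} {W X : Matrix q q K} {N : Matrix p q K}
    (hU : IsUnit U) (hV : IsUnit V) (hW : IsUnit W) (hX : IsUnit X) (hN : ∀ r s, N r s ≠ 0) :
    ((U ⊗ₖ W) * diagonal (fun r : p × q => N r.1 r.2) * (V ⊗ₖ X)ᵀ).rank =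
      Fintype.card p * Fintype.card q := by
  have hD : IsUnit (diagonal fun r : p × q => N r.1 r.2) :=
    isUnit_diagonal.2 <| Pi.isUnit_iff.2 fun r => (hN r.1 r.2).isUnit
  have hVX : IsUnit (V ⊗ₖ X)ᵀ := (isUnit_transpose _).2 (hV.kronecker hX)
  rw [rank_of_isUnit _ (((hU.kronecker hW).mul hD).mul hVX), Fintype.card_prod]

end Matrix

/-- For nonsingular κ×κ matrices U, V, W, X and a κ×κ matrix N with all
entries nonzero, the tensor `p_{ijkl} = Σ_{m,n} U_{im} V_{jm} N_{mn} W_{kn} X_{ln}` has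
13|24-flattening (rows `(i,k)`, columns `(j,l)`) equal to `(U ⊗ W) diag(N) (V ⊗ X)ᵀ`,
which has rank κ². -/
theorem stmt19 {κ : ℕ} (U V W X N : Matrix (Fin κ) (Fin κ) ℝ)
    (hU : IsUnit U.det) (hV : IsUnit V.det) (hW : IsUnit W.det) (hX : IsUnit X.det)
    (hN : ∀ m n, N m n ≠ 0)
    (P : Fin κ → Fin κ → Fin κ → Fin κ → ℝ)
    (hP : ∀ i j k l, P i j k l = ∑ m, ∑ n, U i m * V j m * N m n * W k n * X l n) :
    (Matrix.of (fun p q : Fin κ × Fin κ => P p.1 q.1 p.2 q.2)) =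
      (U ⊗ₖ W) * Matrix.diagonal (fun p : Fin κ × Fin κ => N p.1 p.2) * (V ⊗ₖ X)ᵀ ∧
    (Matrix.of (fun p q : Fin κ × Fin κ => P p.1 q.1 p.2 q.2)).rank = κ ^ 2 := by
  have hflat : Matrix.of (fun p q : Fin κ × Fin κ => P p.1 q.1 p.2 q.2) =
      (U ⊗ₖ W) * Matrix.diagonal (fun p : Fin κ × Fin κ => N p.1 p.2) * (V ⊗ₖ X)ᵀ := by
    rw [kronecker_mul_diagonal_mul_kronecker_transpose]
    ext a b
    exact hP _ _ _ _
  refine ⟨hflat, ?_⟩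
  rw [hflat, rank_kronecker_mul_diagonal_mul_kronecker_transpose ((isUnit_iff_isUnit_det U).2 hU)
    ((isUnit_iff_isUnit_det V).2 hV) ((isUnit_iff_isUnit_det W).2 hW)
    ((isUnit_iff_isUnit_det X).2 hX) hN, Fintype.card_fin, sq]
end
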